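/- arXiv:cs/0005030 — 6 statements merged into one kernel-verified Lean document; each statement's English description precedes it below -/
import Mathlib

section
/- Distribution of intervention over disjunction is valid in models with unique solutions: for every causal model T in T_uniq(S), every vector Y⃗ of distinct endogenous variables with values y⃗, and all Boolean combinations φ, ψ of atoms of the form X(u⃗)=x, T ⊨ [Y⃗←y⃗](φ ∨ ψ) if and only if T ⊨ [Y⃗←y⃗]φ or T ⊨ [Y⃗←y⃗]ψ. -/
/-- A signature `S = (U, V, R)`: finite (disjoint) sets of exogenous variables `U` and
endogenous variables `V`, together with a nonempty finite set (here: type) of possible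
values for each variable. -/
structure Signature where
  U : Type
  V : Type
  uFin : Fintype U
  vFin : Fintype V
  vDecEq : DecidableEq V
  valU : U → Type
  valV : V → Type
  valUFin : ∀ u, Fintype (valU u)
  valVFin : ∀ X, Fintype (valV X)
  valUNonempty : ∀ u, Nonempty (valU u)
  valVNonempty : ∀ X, Nonempty (valV X)

attribute [instance] Signature.uFin Signature.vFin Signature.vDecEq
  Signature.valUFin Signature.valVFin Signature.valUNonempty Signature.valVNonempty

/-- The standing assumption `|R(Y)| ≥ 2` for every variable `Y`. -/
def Signature.Standard (S : Signature) : Prop :=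
  (∀ u, 2 ≤ Fintype.card (S.valU u)) ∧ (∀ X, 2 ≤ Fintype.card (S.valV X))

/-- A setting `u⃗` of values for all the exogenous variables. -/
abbrev Signature.Context (S : Signature) : Type := ∀ u : S.U, S.valU u

/-- An assignment of values to all the endogenous variables. -/
abbrev Signature.Assignment (S : Signature) : Type := ∀ X : S.V, S.valV X

/-- An intervention `X⃗ ← x⃗`: a vector of distinct endogenous variables together with
values for them, encoded as a partial assignment. -/
abbrev Signature.Intervention (S : Signature) : Type := ∀ X : S.V, Option (S.valV X)

/-- The empty intervention (`[true]`). -/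
def Signature.emptyInt (S : Signature) : S.Intervention := fun _ => none

/-- Extend an intervention by additionally setting `W` to `w`. -/
def intUpdate {S : Signature} (g : S.Intervention) (W : S.V) (w : S.valV W) :
    S.Intervention :=
  fun X => if h : X = W then some (cast (congrArg S.valV h).symm w) else g X

/-- A causal model `T = (S, F)` over the signature `S`. -/
structure CausalModel (S : Signature) where
  F : ∀ X : S.V, S.Context → (∀ Y : S.V, Y ≠ X → S.valV Y) → S.valV X

/-- `v` is a solution of `T_{X⃗ ← x⃗}(u⃗)` (intervention encoded by `g`): intervened
variables take their set values, and every other variable satisfies its equation. -/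
def CausalModel.IsSolution {S : Signature} (T : CausalModel S) (g : S.Intervention)
    (u : S.Context) (v : S.Assignment) : Prop :=
  ∀ X : S.V,
    (∀ x, g X = some x → v X = x) ∧
    (g X = none → v X = T.F X u fun Y _ => v Y)

/-- `T ∈ T_uniq(S)`: the equations of `T_{X⃗ ← x⃗}(u⃗)` have a unique solution, for every
intervention and every context. -/
def CausalModel.UniqueSolutions {S : Signature} (T : CausalModel S) : Prop :=
  ∀ (g : S.Intervention) (u : S.Context), ∃! v : S.Assignment, T.IsSolution g u v

/-- `T ∈ T_rec(S)`: there is a (strict) total order `≺` on `V` such that `F_X` is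
independent of the value of `Y` whenever `X ≺ Y`. -/
def CausalModel.Recursive {S : Signature} (T : CausalModel S) : Prop :=
  ∃ r : S.V → S.V → Prop, IsStrictTotalOrder S.V r ∧
    ∀ (X : S.V) (u : S.Context) (w w' : ∀ Y : S.V, Y ≠ X → S.valV Y),
      (∀ (Y : S.V) (h : Y ≠ X), ¬ r X Y → w Y h = w' Y h) →
      T.F X u w = T.F X u w'

/-- Boolean combinations of atoms of the form `X(u⃗) = x`. -/
inductive IForm (S : Signature) : Type where
  | atom : (X : S.V) → S.Context → S.valV X → IForm S
  | not : IForm S → IForm S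
  | and : IForm S → IForm S → IForm S
  | or : IForm S → IForm S → IForm S

namespace IForm

variable {S : Signature}

/-- The settings `u⃗` of the exogenous variables mentioned in a formula. -/
def mentions : IForm S → Set S.Context
  | atom _ u _ => {u}
  | not φ => φ.mentions
  | and φ ψ => φ.mentions ∪ ψ.mentions
  | or φ ψ => φ.mentions ∪ ψ.mentions

/-- The endogenous variables appearing in a formula. -/
def vars : IForm S → Set S.V
  | atom X _ _ => {X}
  | not φ => φ.vars
  | and φ ψ => φ.vars ∪ ψ.vars
  | or φ ψ => φ.vars ∪ ψ.vars

/-- Evaluate a Boolean combination of atoms, where the atoms mentioning `u⃗` are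
evaluated in the assignment `σ u⃗`. -/
def eval (σ : S.Context → S.Assignment) : IForm S → Prop
  | atom X u x => σ u X = x
  | not φ => ¬ φ.eval σ
  | and φ ψ => φ.eval σ ∧ ψ.eval σ
  | or φ ψ => φ.eval σ ∨ ψ.eval σ

def imp (φ ψ : IForm S) : IForm S := or (not φ) ψ

/-- `φ ∧ ψ₁ ∧ … ∧ ψₙ`. -/
def conj (φ : IForm S) : List (IForm S) → IForm S
  | [] => φ
  | ψ :: l => and φ (conj ψ l)

/-- `φ ∨ ψ₁ ∨ … ∨ ψₙ`. -/
def disj (φ : IForm S) : List (IForm S) → IForm S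
  | [] => φ
  | ψ :: l => or φ (disj ψ l)

/-- Evaluation under an arbitrary truth assignment to the atoms. -/
def pEval (val : ∀ X : S.V, S.Context → S.valV X → Prop) : IForm S → Prop
  | atom X u x => val X u x
  | not φ => ¬ φ.pEval val
  | and φ ψ => φ.pEval val ∧ ψ.pEval val
  | or φ ψ => φ.pEval val ∨ ψ.pEval val

/-- An instance of a propositional tautology. -/
def Tautology (φ : IForm S) : Prop := ∀ val, φ.pEval val

theorem mentions_nonempty : ∀ φ : IForm S, φ.mentions.Nonempty
  | atom _ u _ => ⟨u, rfl⟩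
  | not φ => mentions_nonempty φ
  | and φ _ => (mentions_nonempty φ).imp fun _ h => Set.mem_union_left _ h
  | or φ _ => (mentions_nonempty φ).imp fun _ h => Set.mem_union_left _ h

end IForm

/-- `T ⊨ [X⃗ ← x⃗] φ` : for every choice, for each mentioned setting `u⃗`, of a solution
of `T_{X⃗ ← x⃗}(u⃗)`, the formula `φ` evaluates to true. -/
def CausalModel.boxSat {S : Signature} (T : CausalModel S) (g : S.Intervention)
    (φ : IForm S) : Prop :=
  ∀ σ : S.Context → S.Assignment,
    (∀ u ∈ φ.mentions, T.IsSolution g u (σ u)) → φ.eval σ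

/-- The language `L⁺(S)`: Boolean combinations of basic causal formulas `[Y⃗ ← y⃗] φ`. -/
inductive LPlus (S : Signature) : Type where
  | box : S.Intervention → IForm S → LPlus S
  | not : LPlus S → LPlus S
  | and : LPlus S → LPlus S → LPlus S
  | or : LPlus S → LPlus S → LPlus S

namespace LPlus

variable {S : Signature}

/-- Truth of a causal formula in a causal model. -/
def sat : LPlus S → CausalModel S → Prop
  | box g φ, T => T.boxSat g φ
  | not φ, T => ¬ φ.sat T
  | and φ ψ, T => φ.sat T ∧ ψ.sat T
  | or φ ψ, T => φ.sat T ∨ ψ.sat T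

/-- `⟨X⃗ ← x⃗⟩ φ` abbreviates `¬ [X⃗ ← x⃗] ¬ φ`. -/
def dia (g : S.Intervention) (φ : IForm S) : LPlus S := not (box g (IForm.not φ))

def imp (φ ψ : LPlus S) : LPlus S := or (not φ) ψ

def iff (φ ψ : LPlus S) : LPlus S := and (imp φ ψ) (imp ψ φ)

def conj (φ : LPlus S) : List (LPlus S) → LPlus S
  | [] => φ
  | ψ :: l => and φ (conj ψ l)

def disj (φ : LPlus S) : List (LPlus S) → LPlus S
  | [] => φ
  | ψ :: l => or φ (disj ψ l)

/-- Membership in the sublanguage `L_uniq(S)`: Boolean combinations of formulas of the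
form `[Y⃗ ← y⃗](X(u⃗) = x)`. -/
def InLuniq : LPlus S → Prop
  | box _ φ => ∃ (X : S.V) (u : S.Context) (x : S.valV X), φ = IForm.atom X u x
  | not φ => φ.InLuniq
  | and φ ψ => φ.InLuniq ∧ ψ.InLuniq
  | or φ ψ => φ.InLuniq ∧ ψ.InLuniq

/-- Evaluation under an arbitrary truth assignment to the basic causal formulas. -/
def pEval (val : S.Intervention → IForm S → Prop) : LPlus S → Prop
  | box g φ => val g φ
  | not φ => ¬ φ.pEval val
  | and φ ψ => φ.pEval val ∧ ψ.pEval val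
  | or φ ψ => φ.pEval val ∨ ψ.pEval val

/-- An instance of a propositional tautology. -/
def Tautology (φ : LPlus S) : Prop := ∀ val, φ.pEval val

/-- The endogenous variables appearing in a causal formula (including the variables
set by its interventions). -/
def vars : LPlus S → Set S.V
  | box g φ => {X | g X ≠ none} ∪ φ.vars
  | not φ => φ.vars
  | and φ ψ => φ.vars ∪ ψ.vars
  | or φ ψ => φ.vars ∪ ψ.vars

/-- The settings of the exogenous variables mentioned in a causal formula. -/
def contexts : LPlus S → Set S.Context
  | box _ φ => φ.mentions
  | not φ => φ.contexts
  | and φ ψ => φ.contexts ∪ ψ.contexts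
  | or φ ψ => φ.contexts ∪ ψ.contexts

theorem contexts_nonempty : ∀ φ : LPlus S, φ.contexts.Nonempty
  | box _ φ => φ.mentions_nonempty
  | not φ => contexts_nonempty φ
  | and φ _ => (contexts_nonempty φ).imp fun _ h => Set.mem_union_left _ h
  | or φ _ => (contexts_nonempty φ).imp fun _ h => Set.mem_union_left _ h

end LPlus

/-- `Y` affects `Z` in `T`: for some setting of the exogenous variables and of some
other endogenous variables, changing the value of `Y` changes the value of `Z`. -/
def CausalModel.Affects {S : Signature} (T : CausalModel S) (Y Z : S.V) : Prop :=
  Y ≠ Z ∧ ∃ (g : S.Intervention) (y : S.valV Y) (u : S.Context) (z z' : S.valV Z),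
    g Y = none ∧ g Z = none ∧ z ≠ z' ∧
    T.boxSat (intUpdate g Y y) (IForm.atom Z u z') ∧ T.boxSat g (IForm.atom Z u z)

/-- Provability from a set of axioms using modus ponens. -/
inductive Provable {S : Signature} (Ax : Set (LPlus S)) : LPlus S → Prop
  | ax : ∀ {φ}, φ ∈ Ax → Provable Ax φ
  | mp : ∀ {φ ψ}, Provable Ax (φ.imp ψ) → Provable Ax φ → Provable Ax ψ

theorem eval_congr_aux {S : Signature} :
    ∀ (χ : IForm S) (σ σ' : S.Context → S.Assignment),
      (∀ u ∈ χ.mentions, σ u = σ' u) → (χ.eval σ ↔ χ.eval σ')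
  | IForm.atom X u x, σ, σ', h => by
      simp [IForm.eval, h u rfl]
  | IForm.not φ, σ, σ', h => by
      simp [IForm.eval, eval_congr_aux φ σ σ' h]
  | IForm.and φ ψ, σ, σ', h => by
      simp [IForm.eval,
        eval_congr_aux φ σ σ' (fun u hu => h u (Set.mem_union_left _ hu)),
        eval_congr_aux ψ σ σ' (fun u hu => h u (Set.mem_union_right _ hu))]
  | IForm.or φ ψ, σ, σ', h => by
      simp [IForm.eval,
        eval_congr_aux φ σ σ' (fun u hu => h u (Set.mem_union_left _ hu)),
        eval_congr_aux ψ σ σ' (fun u hu => h u (Set.mem_union_right _ hu))]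

/-- in models with unique solutions, intervention distributes over
disjunction: `T ⊨ [Y⃗←y⃗](φ ∨ ψ)` iff `T ⊨ [Y⃗←y⃗]φ` or `T ⊨ [Y⃗←y⃗]ψ`. -/
theorem box_or_iff_of_uniqueSolutions (S : Signature) (hS : S.Standard)
    (T : CausalModel S) (hT : T.UniqueSolutions) (g : S.Intervention) (φ ψ : IForm S) :
    T.boxSat g (IForm.or φ ψ) ↔ T.boxSat g φ ∨ T.boxSat g ψ := by
  classical
  constructor
  · intro h
    set σ : S.Context → S.Assignment := fun u => Classical.choose (hT g u) with hσdef
    have hσsol : ∀ u, T.IsSolution g u (σ u) := fun u => (Classical.choose_spec (hT g u)).1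
    have hev : (IForm.or φ ψ).eval σ := h σ (fun u _ => hσsol u)
    have key : ∀ (χ : IForm S), χ.eval σ → T.boxSat g χ := by
      intro χ hχ τ hτ
      have hagree : ∀ u ∈ χ.mentions, τ u = σ u := by
        intro u hu
        exact ((Classical.choose_spec (hT g u)).2 (τ u) (hτ u hu))
      have := eval_congr_aux χ τ σ hagree
      exact this.mpr hχ
    rcases hev with hφ | hψ
    · exact Or.inl (key φ hφ)
    · exact Or.inr (key ψ hψ)
  · rintro (h | h) σ hσ
    · exact Or.inl (h σ fun u hu => hσ u (Set.mem_union_left _ hu))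
    · exact Or.inr (h σ fun u hu => hσ u (Set.mem_union_right _ hu))
end

section
/- Over models with unique solutions, the full language collapses to the restricted one: for every formula φ in L⁺(S) there is a formula ψ in L_uniq(S) such that for every causal model T in T_uniq(S), T ⊨ φ if and only if T ⊨ ψ. -/
/-- Translate an inner formula to a Boolean combination of basic formulas `[g](X(u)=x)`. -/
def IForm.tr {S : Signature} (g : S.Intervention) : IForm S → LPlus S
  | .atom X u x => .box g (.atom X u x)
  | .not φ => .not (φ.tr g)
  | .and φ ψ => .and (φ.tr g) (ψ.tr g)
  | .or φ ψ => .or (φ.tr g) (ψ.tr g)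

theorem IForm.tr_inLuniq {S : Signature} (g : S.Intervention) :
    ∀ φ : IForm S, (φ.tr g).InLuniq
  | .atom X u x => ⟨X, u, x, rfl⟩
  | .not φ => tr_inLuniq g φ
  | .and φ ψ => ⟨tr_inLuniq g φ, tr_inLuniq g ψ⟩
  | .or φ ψ => ⟨tr_inLuniq g φ, tr_inLuniq g ψ⟩

theorem IForm.eval_congr {S : Signature} {σ σ' : S.Context → S.Assignment} :
    ∀ φ : IForm S, (∀ u ∈ φ.mentions, σ u = σ' u) → (φ.eval σ ↔ φ.eval σ')
  | .atom X u x, h => by simp [eval, h u rfl]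
  | .not φ, h => not_congr (eval_congr φ h)
  | .and φ ψ, h => and_congr
      (eval_congr φ fun u hu => h u (Set.mem_union_left _ hu))
      (eval_congr ψ fun u hu => h u (Set.mem_union_right _ hu))
  | .or φ ψ, h => or_congr
      (eval_congr φ fun u hu => h u (Set.mem_union_left _ hu))
      (eval_congr ψ fun u hu => h u (Set.mem_union_right _ hu))

theorem boxSat_iff_eval {S : Signature} {T : CausalModel S} (hT : T.UniqueSolutions)
    (g : S.Intervention) (σ : S.Context → S.Assignment)
    (hσ : ∀ u, T.IsSolution g u (σ u)) (φ : IForm S) :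
    T.boxSat g φ ↔ φ.eval σ := by
  constructor
  · exact fun h => h σ fun u _ => hσ u
  · intro h σ' hσ'
    exact (IForm.eval_congr φ fun u hu =>
      (hT g u).unique (hσ u) (hσ' u hu)).mp h

theorem tr_sat_iff_eval {S : Signature} {T : CausalModel S} (hT : T.UniqueSolutions)
    (g : S.Intervention) (σ : S.Context → S.Assignment)
    (hσ : ∀ u, T.IsSolution g u (σ u)) :
    ∀ φ : IForm S, ((φ.tr g).sat T ↔ φ.eval σ)
  | .atom X u x => boxSat_iff_eval hT g σ hσ (.atom X u x)
  | .not φ => not_congr (tr_sat_iff_eval hT g σ hσ φ)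
  | .and φ ψ => and_congr (tr_sat_iff_eval hT g σ hσ φ) (tr_sat_iff_eval hT g σ hσ ψ)
  | .or φ ψ => or_congr (tr_sat_iff_eval hT g σ hσ φ) (tr_sat_iff_eval hT g σ hσ ψ)

/-- over models with unique solutions, every formula of `L⁺(S)` is
equivalent to a formula of `L_uniq(S)`. -/
theorem LPlus_collapses_to_Luniq_on_Tuniq (S : Signature) (hS : S.Standard)
    (φ : LPlus S) :
    ∃ ψ : LPlus S, ψ.InLuniq ∧
      ∀ T : CausalModel S, T.UniqueSolutions → (φ.sat T ↔ ψ.sat T) := by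
  induction φ with
  | box g φ =>
      refine ⟨φ.tr g, IForm.tr_inLuniq g φ, fun T hT => ?_⟩
      let σ : S.Context → S.Assignment := fun u => (hT g u).choose
      have hσ : ∀ u, T.IsSolution g u (σ u) := fun u => (hT g u).choose_spec.1
      exact (boxSat_iff_eval hT g σ hσ φ).trans (tr_sat_iff_eval hT g σ hσ φ).symm
  | not φ ih =>
      obtain ⟨ψ, hψ, h⟩ := ih
      exact ⟨.not ψ, hψ, fun T hT => not_congr (h T hT)⟩
  | and φ₁ φ₂ ih₁ ih₂ =>
      obtain ⟨ψ₁, hψ₁, h₁⟩ := ih₁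
      obtain ⟨ψ₂, hψ₂, h₂⟩ := ih₂
      exact ⟨.and ψ₁ ψ₂, ⟨hψ₁, hψ₂⟩, fun T hT => and_congr (h₁ T hT) (h₂ T hT)⟩
  | or φ₁ φ₂ ih₁ ih₂ =>
      obtain ⟨ψ₁, hψ₁, h₁⟩ := ih₁
      obtain ⟨ψ₂, hψ₂, h₂⟩ := ih₂
      exact ⟨.or ψ₁ ψ₂, ⟨hψ₁, hψ₂⟩, fun T hT => or_congr (h₁ T hT) (h₂ T hT)⟩
end

section
/- There exists a nonrecursive causal model all of whose interventions have unique solutions: let S = (∅, {X, Y}, R) with R(X) = R(Y) = {−1, 0, 1}, and let T be the causal model with F_X(y) = y and F_Y(x) = −x. Then T is not recursive, yet T ∈ T_uniq(S); in particular, the equations of T have the unique solution X = 0, Y = 0, the equations of T_{X←x} have the unique solution Y = −x, and the equations of T_{Y←y} have the unique solution X = y. -/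
/-- The value set `{-1, 0, 1}`. -/
abbrev V3 : Type := ↥({-1, 0, 1} : Finset ℤ)

/-- The signature `S = (∅, {X, Y}, R)` with `R(X) = R(Y) = {−1, 0, 1}`; `X` is the
variable `0 : Fin 2`, `Y` is `1 : Fin 2`. -/
def sig5 : Signature where
  U := Empty
  V := Fin 2
  uFin := inferInstance
  vFin := inferInstance
  vDecEq := inferInstance
  valU := fun u => u.elim
  valV := fun _ => V3
  valUFin := fun u => u.elim
  valVFin := fun _ => inferInstance
  valUNonempty := fun u => u.elim
  valVNonempty := fun _ => ⟨⟨0, by decide⟩⟩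

/-- The variable `X`. -/
def X5 : sig5.V := (0 : Fin 2)
/-- The variable `Y`. -/
def Y5 : sig5.V := (1 : Fin 2)

def neg5 (x : V3) : V3 :=
  ⟨-x.1, by have := x.2; simp only [Finset.mem_insert, Finset.mem_singleton] at this ⊢; omega⟩

/-- The causal model with `F_X(y) = y` and `F_Y(x) = −x`. -/
def model5 : CausalModel sig5 where
  F := fun Z u w =>
    if h : Z = X5 then w Y5 (by rw [h]; decide)
    else neg5 (w X5 (Ne.symm h))

/-- The intervention setting just the variable `i` to `x`. -/
def setInt5 (i : sig5.V) (x : V3) : sig5.Intervention :=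
  fun Z => if Z = i then some x else none

def zero5 : V3 := ⟨0, by decide⟩

/-!
`F_X` depends on `Y` and `F_Y` on `X`, which no total order permits, so `T` is not recursive.
Reading an intervention as optional values `x`, `y` for `X`, `Y`, the equations become
`X = x.getD Y`, `Y = y.getD (-X)`: once one variable is set the other is determined, and with
no intervention `X = -X` forces `X = Y = 0`. The same holds for any cycle `X = h Y`, `Y = f X`
in which `h ∘ f` has a unique fixed point.
-/

namespace CausalModel

variable {S : Signature} (T : CausalModel S)

def DependsOn (X Y : S.V) : Prop :=
  ∃ (u : S.Context) (w w' : ∀ Z : S.V, Z ≠ X → S.valV Z),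
    (∀ Z h, Z ≠ Y → w Z h = w' Z h) ∧ T.F X u w ≠ T.F X u w'

variable {T}

theorem Recursive.eq_of_dependsOn_of_dependsOn (hT : T.Recursive) {X Y : S.V}
    (hXY : T.DependsOn X Y) (hYX : T.DependsOn Y X) : X = Y := by
  obtain ⟨r, hr, hindep⟩ := hT
  have not_rel : ∀ {A B : S.V}, T.DependsOn A B → ¬ r A B := by
    rintro A B ⟨u, w, w', hagree, hne⟩ hAB
    exact hne <| hindep A u w w' fun Z h hZ => hagree Z h <| by rintro rfl; exact hZ hAB
  rcases (haveI := hr; trichotomous_of r X Y) with h | h | h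
  · exact absurd h (not_rel hXY)
  · exact h
  · exact absurd h (not_rel hYX)

theorem isSolution_iff_forall_getD {g : S.Intervention} {u : S.Context} {v : S.Assignment} :
    T.IsSolution g u v ↔ ∀ X, v X = (g X).getD (T.F X u fun Y _ => v Y) := by
  refine forall_congr' fun X => ?_
  cases g X <;> simp

end CausalModel

/-- The cycle `a = h b`, `b = f a`, where `x` (resp. `y`), when present, overrides the equation
for `a` (resp. `b`). -/
theorem existsUnique_getD_cycle {α β : Type*} {f : α → β} {h : β → α}
    (hfix : ∃! a, h (f a) = a) (x : Option α) (y : Option β) :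
    ∃! p : α × β, p.1 = x.getD (h p.2) ∧ p.2 = y.getD (f p.1) := by
  rcases x with _ | a <;> rcases y with _ | b <;> simp only [Option.getD_none, Option.getD_some]
  · obtain ⟨a, ha, huniq⟩ := hfix
    refine ⟨(a, f a), ⟨ha.symm, rfl⟩, ?_⟩
    rintro ⟨a', b'⟩ ⟨ha', hb'⟩
    dsimp only at ha' hb'
    subst hb'
    rw [huniq a' ha'.symm]
  · refine ⟨(h b, b), ⟨rfl, rfl⟩, ?_⟩
    rintro ⟨a', b'⟩ ⟨ha', hb'⟩
    dsimp only at ha' hb'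
    subst hb' ha'
    rfl
  · refine ⟨(a, f a), ⟨rfl, rfl⟩, ?_⟩
    rintro ⟨a', b'⟩ ⟨ha', hb'⟩
    dsimp only at ha' hb'
    subst ha' hb'
    rfl
  · exact ⟨(a, b), ⟨rfl, rfl⟩, fun p hp => Prod.ext hp.1 hp.2⟩

theorem neg5_eq_self_iff : ∀ x : V3, neg5 x = x ↔ x = zero5 := by decide

theorem setInt5_self (i : sig5.V) (x : V3) : setInt5 i x i = some x := if_pos rfl

theorem setInt5_of_ne {i j : sig5.V} (h : j ≠ i) (x : V3) : setInt5 i x j = none := if_neg h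

theorem model5_isSolution_iff {g : sig5.Intervention} {u : sig5.Context}
    {v : sig5.Assignment} :
    model5.IsSolution g u v ↔
      v X5 = (g X5).getD (v Y5) ∧ v Y5 = (g Y5).getD (neg5 (v X5)) :=
  CausalModel.isSolution_iff_forall_getD.trans Fin.forall_fin_two

theorem model5_not_recursive : ¬ model5.Recursive := by
  intro hT
  let one : V3 := ⟨1, by decide⟩
  have no_third_var : ∀ {A B : sig5.V}, A ≠ B → ∀ Z, Z ≠ A → Z ≠ B → False := by decide
  have hXY : model5.DependsOn X5 Y5 :=
    ⟨fun e => e.elim, fun _ _ => zero5, fun _ _ => one,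
      fun Z hX hY => (no_third_var (by decide) Z hX hY).elim, (by decide : zero5 ≠ one)⟩
  have hYX : model5.DependsOn Y5 X5 :=
    ⟨fun e => e.elim, fun _ _ => zero5, fun _ _ => one,
      fun Z hY hX => (no_third_var (by decide) Z hY hX).elim, (by decide : neg5 zero5 ≠ neg5 one)⟩
  exact absurd (hT.eq_of_dependsOn_of_dependsOn hXY hYX) (by decide)

theorem model5_uniqueSolutions : model5.UniqueSolutions := by
  intro g u
  refine ((piFinTwoEquiv fun _ => V3).existsUnique_congr
    (q := fun p : V3 × V3 => p.1 = (g X5).getD p.2 ∧ p.2 = (g Y5).getD (neg5 p.1))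
    fun _ => model5_isSolution_iff).2 ?_
  exact existsUnique_getD_cycle (f := neg5) (h := id)
    ⟨zero5, by decide, fun a => (neg5_eq_self_iff a).1⟩ _ _

theorem model5_isSolution_emptyInt_iff (u : sig5.Context) (v : sig5.Assignment) :
    model5.IsSolution sig5.emptyInt u v ↔ v X5 = zero5 ∧ v Y5 = zero5 := by
  rw [model5_isSolution_iff]
  show v X5 = v Y5 ∧ v Y5 = neg5 (v X5) ↔ _
  constructor
  · rintro ⟨hxy, hy⟩
    have hx : v X5 = zero5 := (neg5_eq_self_iff _).1 (hxy.trans hy).symm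
    exact ⟨hx, hxy.symm.trans hx⟩
  · rintro ⟨hx, hy⟩
    exact ⟨hx.trans hy.symm, hy.trans <| ((neg5_eq_self_iff _).2 hx).trans hx |>.symm⟩

theorem model5_isSolution_setInt5_X_iff (u : sig5.Context) (x : V3) (v : sig5.Assignment) :
    model5.IsSolution (setInt5 X5 x) u v ↔ v X5 = x ∧ v Y5 = neg5 x := by
  rw [model5_isSolution_iff, setInt5_self, setInt5_of_ne (by decide)]
  show v X5 = x ∧ v Y5 = neg5 (v X5) ↔ _
  exact and_congr_right fun hx => by rw [hx]

theorem model5_isSolution_setInt5_Y_iff (u : sig5.Context) (y : V3) (v : sig5.Assignment) :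
    model5.IsSolution (setInt5 Y5 y) u v ↔ v Y5 = y ∧ v X5 = y := by
  rw [model5_isSolution_iff, setInt5_self, setInt5_of_ne (by decide)]
  show v X5 = v Y5 ∧ v Y5 = y ↔ _
  exact ⟨fun ⟨hxy, hy⟩ => ⟨hy, hxy.trans hy⟩, fun ⟨hy, hx⟩ => ⟨hx.trans hy.symm, hy⟩⟩

/-- a nonrecursive causal model all of whose interventions have unique
solutions: `T` (with `F_X(y) = y`, `F_Y(x) = −x`) is not recursive, is in `T_uniq(S)`,
its equations have the unique solution `X = 0, Y = 0`, the equations of `T_{X←x}` have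
the unique solution `Y = −x` (and `X = x`), and the equations of `T_{Y←y}` have the
unique solution `X = y` (and `Y = y`). -/
theorem nonrecursive_model_with_unique_solutions :
    ¬ model5.Recursive ∧
    model5.UniqueSolutions ∧
    (∀ (u : sig5.Context) (v : sig5.Assignment),
      model5.IsSolution sig5.emptyInt u v ↔ (v X5 = zero5 ∧ v Y5 = zero5)) ∧
    (∀ (u : sig5.Context) (x : V3) (v : sig5.Assignment),
      model5.IsSolution (setInt5 X5 x) u v ↔ (v X5 = x ∧ v Y5 = neg5 x)) ∧
    (∀ (u : sig5.Context) (y : V3) (v : sig5.Assignment),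
      model5.IsSolution (setInt5 Y5 y) u v ↔ (v Y5 = y ∧ v X5 = y)) :=
  ⟨model5_not_recursive, model5_uniqueSolutions, model5_isSolution_emptyInt_iff,
    model5_isSolution_setInt5_X_iff, model5_isSolution_setInt5_Y_iff⟩
end

section
/- Soundness of reversibility (C5) in models with unique solutions: for every causal model T in T_uniq(S), every vector X⃗ of distinct endogenous variables with values x⃗, all distinct endogenous variables W, Y not in X⃗, values w ∈ R(W), y ∈ R(Y), and every setting u⃗ of the exogenous variables, if T ⊨ Y_{x⃗w}(u⃗) = y and T ⊨ W_{x⃗y}(u⃗) = w, then T ⊨ Y_{x⃗}(u⃗) = y. -/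
/-- soundness of reversibility (C5) in models with unique solutions: if
`T ⊨ Y_{x⃗w}(u⃗) = y` and `T ⊨ W_{x⃗y}(u⃗) = w` then `T ⊨ Y_{x⃗}(u⃗) = y`. -/
theorem reversibility_sound (S : Signature) (hS : S.Standard) (T : CausalModel S)
    (hT : T.UniqueSolutions) (g : S.Intervention) (W Y : S.V) (hWY : W ≠ Y)
    (hW : g W = none) (hY : g Y = none) (u : S.Context) (w : S.valV W) (y : S.valV Y)
    (h1 : T.boxSat (intUpdate g W w) (IForm.atom Y u y))
    (h2 : T.boxSat (intUpdate g Y y) (IForm.atom W u w)) :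
    T.boxSat g (IForm.atom Y u y) := by
  intro sig hsig
  have hv : T.IsSolution g u (sig u) := hsig u rfl
  obtain ⟨sw, hsw, _⟩ := hT (intUpdate g W w) u
  obtain ⟨sy, hsy, _⟩ := hT (intUpdate g Y y) u
  have hswY : sw Y = y := h1 (fun _ => sw) (fun u' hu' => by
    have : u' = u := hu'
    subst this; exact hsw)
  have hsyW : sy W = w := h2 (fun _ => sy) (fun u' hu' => by
    have : u' = u := hu'
    subst this; exact hsy)
  set g2 := intUpdate (intUpdate g W w) Y y with hg2
  have hg2Y : g2 Y = some y := by simp [hg2, intUpdate]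
  have hg2W : g2 W = some w := by simp [hg2, intUpdate, hWY, Ne.symm hWY]
  have hg2other : ∀ X, X ≠ Y → X ≠ W → g2 X = g X := by
    intro X hXY hXW; simp [hg2, intUpdate, hXY, hXW]
  have hswSol : T.IsSolution g2 u sw := by
    intro X
    by_cases hXY : X = Y
    · subst hXY
      refine ⟨fun x hx => ?_, fun hx => by simp [hg2Y] at hx⟩
      rw [hg2Y] at hx
      rw [hswY]; exact (Option.some.inj hx)
    · have : g2 X = intUpdate g W w X := by
        simp [hg2, intUpdate, hXY]
      rw [this]
      exact hsw X
  have hsySol : T.IsSolution g2 u sy := by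
    intro X
    by_cases hXW : X = W
    · subst hXW
      refine ⟨fun x hx => ?_, fun hx => by simp [hg2W] at hx⟩
      rw [hg2W] at hx
      rw [hsyW]; exact (Option.some.inj hx)
    · have : g2 X = intUpdate g Y y X := by
        by_cases hXY : X = Y
        · subst hXY; simp [hg2Y, intUpdate]
        · rw [hg2other X hXY hXW]; simp [intUpdate, hXY]
      rw [this]
      exact hsy X
  have hswsy : sw = sy := by
    obtain ⟨s2, _, hs2u⟩ := hT g2 u
    rw [hs2u sw hswSol, hs2u sy hsySol]
  have hswg : T.IsSolution g u sw := by
    intro X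
    by_cases hXW : X = W
    · subst hXW
      refine ⟨fun x hx => by rw [hW] at hx; exact absurd hx (by simp), fun _ => ?_⟩
      rw [hswsy]
      exact (hsy X).2 (by simp [intUpdate, hWY, hW])
    · have : intUpdate g W w X = g X := by simp [intUpdate, hXW]
      have h := hsw X
      rw [this] at h
      exact h
  have : sig u = sw := by
    obtain ⟨s0, _, hs0u⟩ := hT g u
    rw [hs0u (sig u) hv, hs0u sw hswg]
  show sig u Y = y
  rw [this, hswY]
end

section
/- Soundness of recursiveness (C6) in recursive models: for every recursive causal model T over S and all endogenous variables X_0, X_1, …, X_k, if X_0 affects X_1 in T, X_1 affects X_2 in T, …, and X_{k−1} affects X_k in T, then X_k does not affect X_0 in T. -/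
/-!
In a recursive model each `F_X` reads only the `≺`-predecessors of `X`. Hence, by well-founded
recursion along `≺`, every `T_{X⃗ ← x⃗}(u⃗)` has a solution (needed, since `[X⃗ ← x⃗] φ` holds
vacuously when there is none), and in any solution the values of the predecessors of `Y` are
determined without consulting `Y`. So intervening on `Y` cannot change a variable `Z ≺ Y`: if `Y`
affects `Z` then `Y ≺ Z`. A chain `X_0 ⤳ ⋯ ⤳ X_k ⤳ X_0` would therefore be a `≺`-cycle.
-/

theorem Fin.reflTransGen_zero_last {α : Type*} {r : α → α → Prop} :
    ∀ {k : ℕ} {f : Fin (k + 1) → α}, (∀ i : Fin k, r (f i.castSucc) (f i.succ)) →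
      Relation.ReflTransGen r (f 0) (f (Fin.last k))
  | 0, _, _ => .refl
  | _ + 1, f, h =>
    .tail (Fin.reflTransGen_zero_last (f := fun i => f i.castSucc) fun i => h i.castSucc)
      (h (Fin.last _))

theorem intUpdate_apply_of_ne {S : Signature} (g : S.Intervention) {W : S.V} (w : S.valV W)
    {X : S.V} (h : X ≠ W) : intUpdate g W w X = g X :=
  dif_neg h

namespace CausalModel

variable {S : Signature} (T : CausalModel S) {r : S.V → S.V → Prop}

def DependsOnlyOnPredecessors (r : S.V → S.V → Prop) : Prop :=
  ∀ (X : S.V) (u : S.Context) (w w' : ∀ Y : S.V, Y ≠ X → S.valV Y),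
    (∀ (Y : S.V) (h : Y ≠ X), r Y X → w Y h = w' Y h) → T.F X u w = T.F X u w'

theorem Recursive.exists_dependsOnlyOnPredecessors {T : CausalModel S} (hT : T.Recursive) :
    ∃ r, IsStrictTotalOrder S.V r ∧ T.DependsOnlyOnPredecessors r := by
  obtain ⟨r, hr, hF⟩ := hT
  refine ⟨r, hr, fun X u w w' hw => hF X u w w' fun Y hYX hXY => hw Y hYX ?_⟩
  exact (trichotomous_of r Y X).resolve_right (by rintro (rfl | h); exacts [hYX rfl, hXY h])

open Classical in
/-- The values fed to `F_X` at non-predecessors of `X` are arbitrary; under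
`DependsOnlyOnPredecessors` they do not matter. -/
noncomputable def recSolution (hwf : WellFounded r) (g : S.Intervention) (u : S.Context) :
    S.Assignment :=
  hwf.fix fun X sol =>
    (g X).elim (T.F X u fun Y _ => if h : r Y X then sol Y h else Classical.arbitrary _) id

theorem isSolution_recSolution (hwf : WellFounded r) (hT : T.DependsOnlyOnPredecessors r)
    (g : S.Intervention) (u : S.Context) : T.IsSolution g u (T.recSolution hwf g u) := by
  intro X
  rw [recSolution, hwf.fix_eq]
  refine ⟨fun x hx => by rw [hx]; rfl, fun hX => ?_⟩
  rw [hX]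
  refine hT X u _ _ fun Y _ hYX => ?_
  rw [dif_pos hYX]

theorem exists_isSolution (hwf : WellFounded r) (hT : T.DependsOnlyOnPredecessors r)
    (g : S.Intervention) (u : S.Context) : ∃ v, T.IsSolution g u v :=
  ⟨_, T.isSolution_recSolution hwf hT g u⟩

variable {T}

theorem IsSolution.eq_of_boxSat_atom {g : S.Intervention} {u : S.Context} {v : S.Assignment}
    (hv : T.IsSolution g u v) {Z : S.V} {z : S.valV Z} (h : T.boxSat g (IForm.atom Z u z)) :
    v Z = z :=
  h (fun _ => v) fun _ hu => by obtain rfl := hu; exact hv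

theorem IsSolution.eq_below [IsTrans S.V r] (hwf : WellFounded r)
    (hT : T.DependsOnlyOnPredecessors r) {g g' : S.Intervention} {u : S.Context}
    {v v' : S.Assignment} (hv : T.IsSolution g u v) (hv' : T.IsSolution g' u v') {Y : S.V}
    (hg : ∀ W, r W Y → g W = g' W) : ∀ W, r W Y → v W = v' W := by
  intro W
  induction W using hwf.induction with
  | _ W ih =>
    intro hWY
    cases hgW : g W with
    | some x => rw [(hv W).1 x hgW, (hv' W).1 x (hg W hWY ▸ hgW)]
    | none =>
      rw [(hv W).2 hgW, (hv' W).2 (hg W hWY ▸ hgW)]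
      exact hT W u _ _ fun W' _ hW'W => ih W' hW'W (trans_of r hW'W hWY)

theorem Affects.rel [IsStrictTotalOrder S.V r] (hT : T.DependsOnlyOnPredecessors r)
    {Y Z : S.V} (h : T.Affects Y Z) : r Y Z := by
  obtain ⟨hYZ, g, y, u, z, z', -, -, hzz', hbox', hbox⟩ := h
  have hwf : WellFounded r := Finite.wellFounded_of_trans_of_irrefl r
  obtain ⟨v, hv⟩ := T.exists_isSolution hwf hT g u
  obtain ⟨v', hv'⟩ := T.exists_isSolution hwf hT (intUpdate g Y y) u
  refine (trichotomous_of r Y Z).resolve_right fun hZY => hzz' ?_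
  obtain rfl | hZY := hZY
  · exact absurd rfl hYZ
  have hg : ∀ W, r W Y → g W = intUpdate g Y y W := fun W hWY =>
    (intUpdate_apply_of_ne g y (ne_of_irrefl hWY)).symm
  calc z = v Z := (hv.eq_of_boxSat_atom hbox).symm
    _ = v' Z := hv.eq_below hwf hT hv' hg Z hZY
    _ = z' := hv'.eq_of_boxSat_atom hbox'

end CausalModel

theorem recursiveness_sound_general (S : Signature) (T : CausalModel S)
    (hT : T.Recursive) (k : ℕ) (X : Fin (k + 1) → S.V)
    (hchain : ∀ i : Fin k, T.Affects (X i.castSucc) (X i.succ)) :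
    ¬ T.Affects (X (Fin.last k)) (X 0) := by
  obtain ⟨r, hr, hdep⟩ := hT.exists_dependsOnlyOnPredecessors
  intro hlast
  have hforward : Relation.ReflTransGen r (X 0) (X (Fin.last k)) :=
    Fin.reflTransGen_zero_last fun i => (hchain i).rel hdep
  have hcycle : Relation.TransGen r (X 0) (X 0) := Relation.TransGen.tail' hforward (hlast.rel hdep)
  exact irrefl_of r _ (Relation.transGen_eq_self (r := r) ▸ hcycle)

/-- soundness of recursiveness (C6) in recursive models: if
`X_0 ⤳ X_1, …, X_{k−1} ⤳ X_k` in `T` then `¬(X_k ⤳ X_0)` in `T`. -/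
theorem recursiveness_sound (S : Signature) (hS : S.Standard) (T : CausalModel S)
    (hT : T.Recursive) (k : ℕ) (X : Fin (k + 1) → S.V)
    (hchain : ∀ i : Fin k, T.Affects (X i.castSucc) (X i.succ)) :
    ¬ T.Affects (X (Fin.last k)) (X 0) :=
  recursiveness_sound_general S T hT k X hchain
end

section
/- Theorem (soundness and completeness for T_uniq): for every signature S, the axiom system AX_uniq(S) is sound and complete for the language L_uniq(S) with respect to the class T_uniq(S); that is, a formula of L_uniq(S) is provable in AX_uniq(S) if and only if it is true in every causal model in T_uniq(S). -/
/-! ### The axiom system `AX_uniq(S)` / `AX_rec(S)` for the language `L_uniq(S)` -/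

/-- C0: all instances of propositional tautologies (in the language `L_uniq(S)`). -/
def C0Ax (S : Signature) : Set (LPlus S) := {φ | φ.Tautology ∧ φ.InLuniq}

/-- C1 (equality): `X_{y⃗}(u⃗) = x ⇒ ¬(X_{y⃗}(u⃗) = x')` for distinct `x, x'`. -/
def C1Ax (S : Signature) : Set (LPlus S) :=
  {φ | ∃ (g : S.Intervention) (X : S.V) (u : S.Context) (x x' : S.valV X),
    x ≠ x' ∧
    φ = (LPlus.box g (IForm.atom X u x)).imp (LPlus.not (LPlus.box g (IForm.atom X u x')))}

/-- C2 (definiteness): `∨_{x ∈ R(X)} X_{y⃗}(u⃗) = x`. -/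
def C2Ax (S : Signature) : Set (LPlus S) :=
  {φ | ∃ (g : S.Intervention) (X : S.V) (u : S.Context) (x : S.valV X) (l : List (S.valV X)),
    (x :: l).Nodup ∧ (∀ y : S.valV X, y ∈ x :: l) ∧
    φ = (LPlus.box g (IForm.atom X u x)).disj (l.map fun y => LPlus.box g (IForm.atom X u y))}

/-- C3 (composition): `(W_{x⃗}(u⃗) = w ∧ Y_{x⃗}(u⃗) = y) ⇒ Y_{x⃗w}(u⃗) = y`. -/
def C3Ax (S : Signature) : Set (LPlus S) :=
  {φ | ∃ (g : S.Intervention) (W Y : S.V) (u : S.Context) (w : S.valV W) (y : S.valV Y),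
    g W = none ∧ g Y = none ∧ W ≠ Y ∧
    φ = (LPlus.and (LPlus.box g (IForm.atom W u w)) (LPlus.box g (IForm.atom Y u y))).imp
          (LPlus.box (intUpdate g W w) (IForm.atom Y u y))}

/-- C4 (effectiveness): `X_{x w⃗}(u⃗) = x` where `X` is one of the set variables. -/
def C4Ax (S : Signature) : Set (LPlus S) :=
  {φ | ∃ (g : S.Intervention) (X : S.V) (u : S.Context) (x : S.valV X),
    g X = some x ∧ φ = LPlus.box g (IForm.atom X u x)}

/-- C5 (reversibility): `(Y_{x⃗w}(u⃗) = y ∧ W_{x⃗y}(u⃗) = w) ⇒ Y_{x⃗}(u⃗) = y`. -/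
def C5Ax (S : Signature) : Set (LPlus S) :=
  {φ | ∃ (g : S.Intervention) (W Y : S.V) (u : S.Context) (w : S.valV W) (y : S.valV Y),
    g W = none ∧ g Y = none ∧ W ≠ Y ∧
    φ = (LPlus.and (LPlus.box (intUpdate g W w) (IForm.atom Y u y))
                   (LPlus.box (intUpdate g Y y) (IForm.atom W u w))).imp
          (LPlus.box g (IForm.atom Y u y))}

/-- A single disjunct `Z_{x⃗y}(u⃗) = z' ∧ Z_{x⃗}(u⃗) = z` (with `z ≠ z'`) of the
formula `Y ⤳ Z`. -/
def AffDisjunct (S : Signature) (Y Z : S.V) (φ : LPlus S) : Prop :=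
  ∃ (g : S.Intervention) (y : S.valV Y) (u : S.Context) (z z' : S.valV Z),
    g Y = none ∧ g Z = none ∧ z ≠ z' ∧
    φ = LPlus.and (LPlus.box (intUpdate g Y y) (IForm.atom Z u z'))
                  (LPlus.box g (IForm.atom Z u z))

/-- `φ` is the formula `Y ⤳ Z` (`Y` affects `Z`): the disjunction, over all settings of
the exogenous variables and of other endogenous variables, of all the disjuncts
`Z_{x⃗y}(u⃗) = z' ∧ Z_{x⃗}(u⃗) = z` with `z ≠ z'`. -/
def IsAffectsFormula (S : Signature) (Y Z : S.V) (φ : LPlus S) : Prop :=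
  Y ≠ Z ∧ ∃ (ψ : LPlus S) (l : List (LPlus S)), (ψ :: l).Nodup ∧
    (∀ χ : LPlus S, χ ∈ ψ :: l ↔ AffDisjunct S Y Z χ) ∧ φ = ψ.disj l

/-- C6 (recursiveness): `(X_0 ⤳ X_1 ∧ … ∧ X_{k-1} ⤳ X_k) ⇒ ¬(X_k ⤳ X_0)`. -/
def C6Ax (S : Signature) : Set (LPlus S) :=
  {φ | ∃ (k : ℕ) (Xs : Fin (k + 2) → S.V) (A : Fin (k + 1) → LPlus S) (B : LPlus S),
    (∀ i : Fin (k + 1), IsAffectsFormula S (Xs i.castSucc) (Xs i.succ) (A i)) ∧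
    IsAffectsFormula S (Xs (Fin.last (k + 1))) (Xs 0) B ∧
    φ = ((A 0).conj (List.ofFn A).tail).imp (LPlus.not B)}

/-- The axiom system `AX_uniq(S)`: C0–C5 (with modus ponens as inference rule). -/
def AXuniq (S : Signature) : Set (LPlus S) :=
  C0Ax S ∪ C1Ax S ∪ C2Ax S ∪ C3Ax S ∪ C4Ax S ∪ C5Ax S

/-- The axiom system `AX_rec(S)`: C0–C4 and C6 (with modus ponens). -/
def AXrec (S : Signature) : Set (LPlus S) :=
  C0Ax S ∪ C1Ax S ∪ C2Ax S ∪ C3Ax S ∪ C4Ax S ∪ C6Ax S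

/-!
Soundness: in a model with unique solutions, the map sending an intervention `g` and a context
`u` to the solution of `T_g(u)` satisfies effectiveness, composition and reversibility, which is
exactly what makes C1–C5 true.

Completeness: as the signature is finite, `AX_uniq(S)` has only finitely many axioms besides
the tautologies, so a valid `φ` is provable as soon as "these axioms imply `φ`" is a
propositional tautology. A truth assignment to the atoms satisfying C1–C5 defines, by C1 and
C2, a map `s` from interventions and contexts to assignments, lawful by C3–C5. In the model
whose equation for `X` reads `X` off `s` under the intervention setting all the other
variables, `s g u` is the unique solution of `T_g(u)`, by induction on the number of variables
left free by `g`: composition gives existence, reversibility uniqueness. Since `φ` holds in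
that model, it holds under the truth assignment.
-/

section Interventions

variable {S : Signature}

theorem intUpdate_self (g : S.Intervention) (W : S.V) (w : S.valV W) :
    intUpdate g W w W = some w := by
  simp [intUpdate]

theorem intUpdate_ne (g : S.Intervention) {X W : S.V} (h : X ≠ W) (w : S.valV W) :
    intUpdate g W w X = g X := by
  simp [intUpdate, h]

theorem intUpdate_comm (g : S.Intervention) {W Y : S.V} (h : W ≠ Y)
    (w : S.valV W) (y : S.valV Y) :
    intUpdate (intUpdate g W w) Y y = intUpdate (intUpdate g Y y) W w := by
  funext X
  by_cases hY : X = Y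
  · subst hY
    rw [intUpdate_self, intUpdate_ne _ (Ne.symm h), intUpdate_self]
  · by_cases hW : X = W
    · subst hW
      rw [intUpdate_ne _ hY, intUpdate_self, intUpdate_self]
    · rw [intUpdate_ne _ hY, intUpdate_ne _ hW, intUpdate_ne _ hW, intUpdate_ne _ hY]

def freeVars (g : S.Intervention) : Set S.V := {X | g X = none}

theorem freeVars_intUpdate (g : S.Intervention) (W : S.V) (w : S.valV W) :
    freeVars (intUpdate g W w) = freeVars g \ {W} := by
  ext X
  by_cases hX : X = W
  · subst hX
    simp [freeVars, intUpdate_self]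
  · simp [freeVars, intUpdate_ne _ hX, hX]

theorem ncard_freeVars_intUpdate_lt {g : S.Intervention} {W : S.V} (hW : g W = none)
    (w : S.valV W) : (freeVars (intUpdate g W w)).ncard < (freeVars g).ncard := by
  rw [freeVars_intUpdate]
  exact Set.ncard_sdiff_singleton_lt_of_mem hW

def setAllBut (X : S.V) (w : ∀ Y : S.V, Y ≠ X → S.valV Y) : S.Intervention :=
  fun Y => if hY : Y = X then none else some (w Y hY)

theorem setAllBut_eq {g : S.Intervention} {X : S.V} {v : S.Assignment}
    (hX : g X = none) (hfree : ∀ W, g W = none → W = X)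
    (hv : ∀ W w, g W = some w → v W = w) :
    setAllBut X (fun Y _ => v Y) = g := by
  funext W
  by_cases hWX : W = X
  · subst hWX
    simp [setAllBut, hX]
  · obtain ⟨w, hw⟩ := Option.ne_none_iff_exists'.1 fun h => hWX (hfree W h)
    simp [setAllBut, hWX, hw, hv W w hw]

end Interventions

namespace CausalModel

variable {S : Signature} {T : CausalModel S}

theorem IsSolution.update {g : S.Intervention} {u : S.Context} {v : S.Assignment}
    (h : T.IsSolution g u v) {W : S.V} {w : S.valV W} (hW : v W = w) :
    T.IsSolution (intUpdate g W w) u v := by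
  intro X
  by_cases hX : X = W
  · subst hX
    rw [intUpdate_self]
    exact ⟨fun x hx => Option.some_inj.1 hx ▸ hW, fun h => nomatch h⟩
  · rw [intUpdate_ne _ hX]
    exact h X

theorem IsSolution.of_update {g : S.Intervention} {u : S.Context} {v : S.Assignment}
    {W : S.V} {w : S.valV W} (h : T.IsSolution (intUpdate g W w) u v) (hgW : g W = none)
    (hW : v W = T.F W u fun Y _ => v Y) :
    T.IsSolution g u v := by
  intro X
  by_cases hX : X = W
  · subst hX
    rw [hgW]
    exact ⟨fun x hx => (nomatch hx), fun _ => hW⟩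
  · rw [← intUpdate_ne g hX w]
    exact h X

noncomputable def sol (hT : T.UniqueSolutions) (g : S.Intervention) (u : S.Context) :
    S.Assignment :=
  (hT g u).exists.choose

theorem sol_isSolution (hT : T.UniqueSolutions) (g : S.Intervention) (u : S.Context) :
    T.IsSolution g u (T.sol hT g u) :=
  (hT g u).exists.choose_spec

theorem eq_sol_of_isSolution (hT : T.UniqueSolutions) {g : S.Intervention}
    {u : S.Context} {v : S.Assignment} (hv : T.IsSolution g u v) : v = T.sol hT g u :=
  (hT g u).unique hv (T.sol_isSolution hT g u)

theorem boxSat_atom_iff (hT : T.UniqueSolutions) (g : S.Intervention) (X : S.V)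
    (u : S.Context) (x : S.valV X) :
    T.boxSat g (IForm.atom X u x) ↔ T.sol hT g u X = x := by
  refine ⟨fun h => h (T.sol hT g) fun u' _ => T.sol_isSolution hT g u', fun h σ hσ => ?_⟩
  change σ u X = x
  rw [T.eq_sol_of_isSolution hT (hσ u rfl), h]

end CausalModel

section Lawful

variable {S : Signature}

structure LawfulSolutions (s : S.Intervention → S.Context → S.Assignment) : Prop where
  effectiveness : ∀ {g : S.Intervention} {u : S.Context} {X : S.V} {x : S.valV X},
    g X = some x → s g u X = x
  composition : ∀ {g : S.Intervention} {u : S.Context} {W Y : S.V} {w : S.valV W}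
    {y : S.valV Y}, g W = none → g Y = none → W ≠ Y →
    s g u W = w → s g u Y = y → s (intUpdate g W w) u Y = y
  reversibility : ∀ {g : S.Intervention} {u : S.Context} {W Y : S.V} {w : S.valV W}
    {y : S.valV Y}, g W = none → g Y = none → W ≠ Y →
    s (intUpdate g W w) u Y = y → s (intUpdate g Y y) u W = w → s g u Y = y

theorem CausalModel.lawfulSolutions_sol {T : CausalModel S} (hT : T.UniqueSolutions) :
    LawfulSolutions (T.sol hT) where
  effectiveness hg := (T.sol_isSolution hT _ _ _).1 _ hg
  composition hgW _ _ hW hY := by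
    rw [← T.eq_sol_of_isSolution hT ((T.sol_isSolution hT _ _).update hW), hY]
  reversibility {g u W Y w y} hgW hgY hWY hY hW := by
    set A := T.sol hT (intUpdate g W w) u
    set B := T.sol hT (intUpdate g Y y) u
    -- `A` and `B` both solve `T_{g, W ← w, Y ← y}(u)`, so `A` satisfies the equation of `W`.
    have hAB : A = B := by
      have hA := (T.sol_isSolution hT (intUpdate g W w) u).update hY
      have hB := (T.sol_isSolution hT (intUpdate g Y y) u).update hW
      rw [intUpdate_comm g hWY] at hA
      exact (T.eq_sol_of_isSolution hT hA).trans (T.eq_sol_of_isSolution hT hB).symm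
    have hAW : A W = T.F W u fun Z _ => A Z := by
      rw [hAB]
      refine (T.sol_isSolution hT (intUpdate g Y y) u W).2 ?_
      rwa [intUpdate_ne _ hWY]
    rw [← T.eq_sol_of_isSolution hT ((T.sol_isSolution hT _ u).of_update hgW hAW)]
    exact hY

def CausalModel.ofSolutions (s : S.Intervention → S.Context → S.Assignment) :
    CausalModel S :=
  ⟨fun X u w => s (setAllBut X w) u X⟩

namespace LawfulSolutions

variable {s : S.Intervention → S.Context → S.Assignment}

theorem update_self (hs : LawfulSolutions s) {g : S.Intervention} {u : S.Context} {W : S.V}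
    (hgW : g W = none) : s (intUpdate g W (s g u W)) u = s g u := by
  funext Y
  by_cases hYW : Y = W
  · subst hYW
    exact hs.effectiveness (intUpdate_self g Y _)
  · cases hgY : g Y with
    | some y =>
      rw [hs.effectiveness hgY, hs.effectiveness (by rwa [intUpdate_ne _ hYW])]
    | none => exact hs.composition hgW hgY (Ne.symm hYW) rfl rfl

theorem apply_setAllBut (hs : LawfulSolutions s) (g : S.Intervention) (u : S.Context)
    {X : S.V} (hX : g X = none) : s (setAllBut X fun Y _ => s g u Y) u X = s g u X := by
  by_cases hfree : ∃ W, g W = none ∧ W ≠ X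
  · obtain ⟨W, hgW, hWX⟩ := hfree
    have := apply_setAllBut hs (intUpdate g W (s g u W)) u
      (by rwa [intUpdate_ne _ (Ne.symm hWX)])
    rwa [hs.update_self hgW] at this
  · push Not at hfree
    rw [setAllBut_eq hX hfree fun _ _ => hs.effectiveness]
termination_by (freeVars g).ncard
decreasing_by exact ncard_freeVars_intUpdate_lt hgW _

theorem isSolution_ofSolutions (hs : LawfulSolutions s) (g : S.Intervention)
    (u : S.Context) : (CausalModel.ofSolutions s).IsSolution g u (s g u) :=
  fun _ => ⟨fun _ => hs.effectiveness, fun hX => (hs.apply_setAllBut g u hX).symm⟩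

theorem eq_of_isSolution_ofSolutions (hs : LawfulSolutions s) {g : S.Intervention}
    {u : S.Context} {v : S.Assignment} (hv : (CausalModel.ofSolutions s).IsSolution g u v) :
    v = s g u := by
  funext Y
  cases hgY : g Y with
  | some y => rw [(hv Y).1 y hgY, hs.effectiveness hgY]
  | none =>
    by_cases hfree : ∃ W, g W = none ∧ W ≠ Y
    · obtain ⟨W, hgW, hWY⟩ := hfree
      have hvW := eq_of_isSolution_ofSolutions hs (hv.update (W := W) rfl)
      have hvY := eq_of_isSolution_ofSolutions hs (hv.update (W := Y) rfl)
      exact (hs.reversibility hgW hgY hWY (congrFun hvW Y).symm (congrFun hvY W).symm).symm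
    · push Not at hfree
      have hY : v Y = s (setAllBut Y fun Z _ => v Z) u Y := (hv Y).2 hgY
      rwa [setAllBut_eq hgY hfree fun W w hW => (hv W).1 w hW] at hY
termination_by (freeVars g).ncard
decreasing_by
  · exact ncard_freeVars_intUpdate_lt hgW _
  · exact ncard_freeVars_intUpdate_lt hgY _

theorem uniqueSolutions_ofSolutions (hs : LawfulSolutions s) :
    (CausalModel.ofSolutions s).UniqueSolutions :=
  fun g u =>
    ⟨s g u, hs.isSolution_ofSolutions g u, fun _ hv => hs.eq_of_isSolution_ofSolutions hv⟩

theorem boxSat_ofSolutions_atom_iff (hs : LawfulSolutions s) (g : S.Intervention)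
    (X : S.V) (u : S.Context) (x : S.valV X) :
    (CausalModel.ofSolutions s).boxSat g (IForm.atom X u x) ↔ s g u X = x := by
  have hT := hs.uniqueSolutions_ofSolutions
  rw [CausalModel.boxSat_atom_iff hT,
    ← hs.eq_of_isSolution_ofSolutions (CausalModel.sol_isSolution hT g u)]

end LawfulSolutions

end Lawful

namespace LPlus

variable {S : Signature}

theorem pEval_imp (val : S.Intervention → IForm S → Prop) (φ ψ : LPlus S) :
    (φ.imp ψ).pEval val ↔ (φ.pEval val → ψ.pEval val) :=
  imp_iff_not_or.symm

theorem pEval_disj (val : S.Intervention → IForm S → Prop) (φ : LPlus S)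
    (l : List (LPlus S)) :
    (φ.disj l).pEval val ↔ ∃ ψ ∈ φ :: l, ψ.pEval val := by
  induction l generalizing φ with
  | nil => simp [disj]
  | cons ψ l ih => simp [disj, pEval, ih]

theorem sat_iff_pEval (T : CausalModel S) (φ : LPlus S) : φ.sat T ↔ φ.pEval T.boxSat := by
  induction φ <;> simp [sat, pEval, *]

theorem sat_imp (T : CausalModel S) (φ ψ : LPlus S) :
    (φ.imp ψ).sat T ↔ (φ.sat T → ψ.sat T) := by
  simp only [sat_iff_pEval, pEval_imp]

theorem pEval_congr_atoms {val val' : S.Intervention → IForm S → Prop}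
    (h : ∀ g X u x, val g (IForm.atom X u x) ↔ val' g (IForm.atom X u x)) {φ : LPlus S}
    (hφ : φ.InLuniq) : φ.pEval val ↔ φ.pEval val' := by
  induction φ with
  | box g ψ =>
    obtain ⟨X, u, x, rfl⟩ := hφ
    exact h g X u x
  | not φ ih => exact not_congr (ih hφ)
  | and φ ψ ihφ ihψ => exact and_congr (ihφ hφ.1) (ihψ hφ.2)
  | or φ ψ ihφ ihψ => exact or_congr (ihφ hφ.1) (ihψ hφ.2)

theorem inLuniq_disj {φ : LPlus S} {l : List (LPlus S)} (h : ∀ ψ ∈ φ :: l, ψ.InLuniq) :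
    (φ.disj l).InLuniq := by
  induction l generalizing φ with
  | nil => exact h φ List.mem_cons_self
  | cons ψ l ih =>
    exact ⟨h φ List.mem_cons_self, ih fun χ hχ => h χ (List.mem_cons_of_mem φ hχ)⟩

end LPlus

theorem Provable.of_forall_pEval {S : Signature} {Ax Γ : Set (LPlus S)} (hC0 : C0Ax S ⊆ Ax)
    (hΓ : Γ.Finite) (hΓAx : ∀ ψ ∈ Γ, ψ.InLuniq ∧ Provable Ax ψ) {φ : LPlus S}
    (hφ : φ.InLuniq) (h : ∀ val, (∀ ψ ∈ Γ, ψ.pEval val) → φ.pEval val) :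
    Provable Ax φ := by
  induction Γ, hΓ using Set.Finite.induction_on generalizing φ with
  | empty => exact Provable.ax (hC0 ⟨fun val => h val (by simp), hφ⟩)
  | @insert ψ Γ _ _ ih =>
    have hψ := hΓAx ψ (Set.mem_insert ψ Γ)
    refine Provable.mp (ih (fun χ hχ => hΓAx χ (Set.mem_insert_of_mem ψ hχ))
      (φ := ψ.imp φ) ⟨hψ.1, hφ⟩ fun val hval => ?_) hψ.2
    rw [LPlus.pEval_imp]
    intro hψval
    exact h val (Set.forall_mem_insert.2 ⟨hψval, hval⟩)

section Axioms

variable {S : Signature}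

def C1to5Ax (S : Signature) : Set (LPlus S) :=
  C1Ax S ∪ C2Ax S ∪ C3Ax S ∪ C4Ax S ∪ C5Ax S

theorem mem_AXuniq_iff {ψ : LPlus S} : ψ ∈ AXuniq S ↔ ψ ∈ C0Ax S ∨ ψ ∈ C1to5Ax S := by
  simp only [AXuniq, C1to5Ax, Set.mem_union, or_assoc]

theorem C1to5Ax_finite : (C1to5Ax S).Finite := by
  refine ((((?_ : (C1Ax S).Finite).union ?_).union ?_).union ?_).union ?_
  · refine (Set.finite_range fun p : S.Intervention × S.Context × Σ X, S.valV X × S.valV X =>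
      (LPlus.box p.1 (.atom p.2.2.1 p.2.1 p.2.2.2.1)).imp
        (.not (.box p.1 (.atom p.2.2.1 p.2.1 p.2.2.2.2)))).subset ?_
    rintro _ ⟨g, X, u, x, x', -, rfl⟩
    exact ⟨(g, u, ⟨X, x, x'⟩), rfl⟩
  · -- the disjunctions of C2 run over repetition-free lists, which are no longer than `R(X)`
    refine (Set.finite_iUnion fun p : S.Intervention × S.Context × S.V =>
      ((Set.finite_univ.prod (List.finite_length_le (S.valV p.2.2)
        (Fintype.card (S.valV p.2.2)))).image fun q =>
          (LPlus.box p.1 (.atom p.2.2 p.2.1 q.1)).disj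
            (q.2.map fun y => .box p.1 (.atom p.2.2 p.2.1 y)))).subset ?_
    rintro _ ⟨g, X, u, x, l, hnodup, -, rfl⟩
    exact Set.mem_iUnion.2
      ⟨(g, u, X), (x, l), ⟨trivial, (List.nodup_cons.1 hnodup).2.length_le_card⟩, rfl⟩
  · refine (Set.finite_range fun p : S.Intervention × S.Context × (Σ W, S.valV W) ×
        (Σ Y, S.valV Y) =>
      (LPlus.and (.box p.1 (.atom p.2.2.1.1 p.2.1 p.2.2.1.2))
        (.box p.1 (.atom p.2.2.2.1 p.2.1 p.2.2.2.2))).imp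
        (.box (intUpdate p.1 p.2.2.1.1 p.2.2.1.2) (.atom p.2.2.2.1 p.2.1 p.2.2.2.2))).subset ?_
    rintro _ ⟨g, W, Y, u, w, y, -, -, -, rfl⟩
    exact ⟨(g, u, ⟨W, w⟩, ⟨Y, y⟩), rfl⟩
  · refine (Set.finite_range fun p : S.Intervention × S.Context × Σ X, S.valV X =>
      LPlus.box p.1 (.atom p.2.2.1 p.2.1 p.2.2.2)).subset ?_
    rintro _ ⟨g, X, u, x, -, rfl⟩
    exact ⟨(g, u, ⟨X, x⟩), rfl⟩
  · refine (Set.finite_range fun p : S.Intervention × S.Context × (Σ W, S.valV W) ×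
        (Σ Y, S.valV Y) =>
      (LPlus.and (.box (intUpdate p.1 p.2.2.1.1 p.2.2.1.2) (.atom p.2.2.2.1 p.2.1 p.2.2.2.2))
        (.box (intUpdate p.1 p.2.2.2.1 p.2.2.2.2) (.atom p.2.2.1.1 p.2.1 p.2.2.1.2))).imp
        (.box p.1 (.atom p.2.2.2.1 p.2.1 p.2.2.2.2))).subset ?_
    rintro _ ⟨g, W, Y, u, w, y, -, -, -, rfl⟩
    exact ⟨(g, u, ⟨W, w⟩, ⟨Y, y⟩), rfl⟩

theorem inLuniq_of_mem_C1to5Ax {ψ : LPlus S} (hψ : ψ ∈ C1to5Ax S) : ψ.InLuniq := by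
  rcases hψ with (((⟨g, X, u, x, x', -, rfl⟩ | ⟨g, X, u, x, l, -, -, rfl⟩) |
    ⟨g, W, Y, u, w, y, -, -, -, rfl⟩) | ⟨g, X, u, x, -, rfl⟩) |
    ⟨g, W, Y, u, w, y, -, -, -, rfl⟩
  · exact ⟨⟨X, u, x, rfl⟩, ⟨X, u, x', rfl⟩⟩
  · refine LPlus.inLuniq_disj fun ψ hψ => ?_
    obtain ⟨y, -, rfl⟩ :=
      List.mem_map.1 (show ψ ∈ (x :: l).map fun y => .box g (.atom X u y) from hψ)
    exact ⟨X, u, y, rfl⟩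
  · exact ⟨⟨⟨W, u, w, rfl⟩, ⟨Y, u, y, rfl⟩⟩, ⟨Y, u, y, rfl⟩⟩
  · exact ⟨X, u, x, rfl⟩
  · exact ⟨⟨⟨Y, u, y, rfl⟩, ⟨W, u, w, rfl⟩⟩, ⟨Y, u, y, rfl⟩⟩

end Axioms

section Bridge

variable {S : Signature} {val : S.Intervention → IForm S → Prop}

theorem pEval_of_mem_C1to5Ax {s : S.Intervention → S.Context → S.Assignment}
    (hs : LawfulSolutions s) (hval : ∀ g X u x, val g (IForm.atom X u x) ↔ s g u X = x)
    {ψ : LPlus S} (hψ : ψ ∈ C1to5Ax S) : ψ.pEval val := by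
  rcases hψ with (((⟨g, X, u, x, x', hne, rfl⟩ | ⟨g, X, u, x, l, -, hall, rfl⟩) |
    ⟨g, W, Y, u, w, y, hgW, hgY, hWY, rfl⟩) | ⟨g, X, u, x, hg, rfl⟩) |
    ⟨g, W, Y, u, w, y, hgW, hgY, hWY, rfl⟩
  · simp only [LPlus.pEval_imp, LPlus.pEval, hval]
    rintro rfl
    exact hne
  · rw [LPlus.pEval_disj]
    exact ⟨_, List.mem_map_of_mem (f := fun y => LPlus.box g (.atom X u y)) (hall (s g u X)),
      (hval g X u _).2 rfl⟩
  · simp only [LPlus.pEval_imp, LPlus.pEval, hval]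
    exact fun ⟨hW, hY⟩ => hs.composition hgW hgY hWY hW hY
  · exact (hval g X u x).2 (hs.effectiveness hg)
  · simp only [LPlus.pEval_imp, LPlus.pEval, hval]
    exact fun ⟨hY, hW⟩ => hs.reversibility hgW hgY hWY hY hW

theorem exists_pEval_atom_of_C2Ax (h : ∀ ψ ∈ C2Ax S, ψ.pEval val) (g : S.Intervention)
    (X : S.V) (u : S.Context) : ∃ x, val g (IForm.atom X u x) := by
  obtain ⟨x, l, hxl⟩ := List.exists_cons_of_ne_nil
    (Finset.toList_eq_nil.not.2 (Finset.univ_nonempty (α := S.valV X)).ne_empty)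
  have hC2 := h _ ⟨g, X, u, x, l, hxl ▸ Finset.nodup_toList _,
    fun y => hxl ▸ Finset.mem_toList.2 (Finset.mem_univ y), rfl⟩
  obtain ⟨_, hmem, hy⟩ := (LPlus.pEval_disj val _ _).1 hC2
  obtain ⟨y, -, rfl⟩ := List.mem_map.1
    (show _ ∈ (x :: l).map fun y => LPlus.box g (.atom X u y) from hmem)
  exact ⟨y, hy⟩

theorem exists_lawfulSolutions_of_pEval (h : ∀ ψ ∈ C1to5Ax S, ψ.pEval val) :
    ∃ s : S.Intervention → S.Context → S.Assignment,
      LawfulSolutions s ∧ ∀ g X u x, val g (IForm.atom X u x) ↔ s g u X = x := by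
  have definite := exists_pEval_atom_of_C2Ax fun ψ hψ => h ψ (.inl (.inl (.inl (.inr hψ))))
  choose s hs using definite
  have hval : ∀ g X u x, val g (IForm.atom X u x) ↔ s g X u = x := by
    refine fun g X u x => ⟨fun hx => ?_, fun hx => hx ▸ hs g X u⟩
    by_contra hne
    have hC1 := h _ (Or.inl (Or.inl (Or.inl (Or.inl ⟨g, X, u, s g X u, x, hne, rfl⟩))))
    exact (LPlus.pEval_imp val _ _).1 hC1 (hs g X u) hx
  refine ⟨fun g u X => s g X u, ⟨fun {g u X x} hg => ?_,
    fun {g u W Y w y} hgW hgY hWY hW hY => ?_, fun {g u W Y w y} hgW hgY hWY hY hW => ?_⟩,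
    hval⟩
  · exact (hval g X u x).1 (h _ (Or.inl (Or.inr ⟨g, X, u, x, hg, rfl⟩)))
  · have hC3 := h _ (Or.inl (Or.inl (Or.inr ⟨g, W, Y, u, w, y, hgW, hgY, hWY, rfl⟩)))
    exact (hval _ Y u y).1 ((LPlus.pEval_imp val _ _).1 hC3
      ⟨(hval g W u w).2 hW, (hval g Y u y).2 hY⟩)
  · have hC5 := h _ (Or.inr ⟨g, W, Y, u, w, y, hgW, hgY, hWY, rfl⟩)
    exact (hval g Y u y).1 ((LPlus.pEval_imp val _ _).1 hC5
      ⟨(hval _ Y u y).2 hY, (hval _ W u w).2 hW⟩)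

end Bridge

theorem sat_of_provable {S : Signature} {T : CausalModel S} (hT : T.UniqueSolutions)
    {φ : LPlus S} (h : Provable (AXuniq S) φ) : φ.sat T := by
  induction h with
  | ax hmem =>
    rw [LPlus.sat_iff_pEval]
    rcases mem_AXuniq_iff.1 hmem with hC0 | hC1to5
    · exact hC0.1 T.boxSat
    · exact pEval_of_mem_C1to5Ax (T.lawfulSolutions_sol hT) (T.boxSat_atom_iff hT) hC1to5
  | mp _ _ ihimp ih => exact (LPlus.sat_imp T _ _).1 ihimp ih

theorem AXuniq_sound_and_complete_general (S : Signature)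
    (φ : LPlus S) (hφ : φ.InLuniq) :
    Provable (AXuniq S) φ ↔ ∀ T : CausalModel S, T.UniqueSolutions → φ.sat T := by
  refine ⟨fun h T hT => sat_of_provable hT h, fun hvalid => ?_⟩
  refine Provable.of_forall_pEval (fun ψ hψ => mem_AXuniq_iff.2 (Or.inl hψ)) C1to5Ax_finite
    (fun ψ hψ => ⟨inLuniq_of_mem_C1to5Ax hψ, .ax (mem_AXuniq_iff.2 (Or.inr hψ))⟩) hφ ?_
  intro val hval
  obtain ⟨s, hs, hsval⟩ := exists_lawfulSolutions_of_pEval hval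
  have hsat := hvalid _ hs.uniqueSolutions_ofSolutions
  rw [LPlus.sat_iff_pEval] at hsat
  exact (LPlus.pEval_congr_atoms (fun g X u x =>
    (hs.boxSat_ofSolutions_atom_iff g X u x).trans (hsval g X u x).symm) hφ).1 hsat

/-- `AX_uniq(S)` is sound and complete for `L_uniq(S)` with respect to
`T_uniq(S)`: a formula of `L_uniq(S)` is provable in `AX_uniq(S)` iff it is true in
every causal model in `T_uniq(S)`. -/
theorem AXuniq_sound_and_complete (S : Signature) (hS : S.Standard)
    (φ : LPlus S) (hφ : φ.InLuniq) :
    Provable (AXuniq S) φ ↔ ∀ T : CausalModel S, T.UniqueSolutions → φ.sat T :=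
  AXuniq_sound_and_complete_general S φ hφ
end
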